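/- arXiv:0805.0034 — 7 statements merged into one kernel-verified Lean document; each statement's English description precedes it below -/
import Mathlib

section
/- For integers m,n ≥ 1 and integer k with 0 ≤ k ≤ min(m,n), and real p > 0, the infimum of ∑_{i=1}^{min(m,n)} (2i-1+|m-n|)·α_i over all tuples α_1 ≥ α_2 ≥ ... ≥ α_{min(m,n)} ≥ 0 satisfying ∑_i (p-α_i)^+ ≤ kp is attained and equals p(m-k)(n-k). -/
open Finset

lemma sum_odd_add (t : ℕ) (d : ℝ) :
    ∑ i ∈ Finset.range t, ((2 * (i : ℝ) + 1) + d) = (t : ℝ) ^ 2 + (t : ℝ) * d := by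
  induction t with
  | zero => simp
  | succ n ih =>
    rw [Finset.sum_range_succ, ih]
    push_cast; ring

lemma sum_ite_range (q t : ℕ) (h : t ≤ q) (f : ℕ → ℝ) :
    ∑ i ∈ Finset.range q, (if i < t then f i else 0) = ∑ i ∈ Finset.range t, f i := by
  rw [← Finset.sum_subset (Finset.range_subset_range.mpr h)
      (fun i _ hi => by simp [Finset.mem_range.not.mp hi])]
  exact Finset.sum_congr rfl fun i hi => by simp [Finset.mem_range.mp hi]

/-- the infimum over the closed constraint set is attained and equals
`p(m-k)(n-k)`. -/
theorem stmt0 (m n k : ℕ) (hm : 1 ≤ m) (hn : 1 ≤ n) (hk : k ≤ min m n)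
    (p : ℝ) (hp : 0 < p) :
    IsLeast { s : ℝ | ∃ α : Fin (min m n) → ℝ,
      (∀ i j : Fin (min m n), i ≤ j → α j ≤ α i) ∧
      (∀ i, 0 ≤ α i) ∧
      (∑ i, max (p - α i) 0) ≤ (k : ℝ) * p ∧
      s = ∑ i : Fin (min m n), ((2 * (i : ℝ) + 1) + |(m : ℝ) - (n : ℝ)|) * α i }
      (p * ((m : ℝ) - (k : ℝ)) * ((n : ℝ) - (k : ℝ))) := by
  set q := min m n with hq
  set d := |(m : ℝ) - (n : ℝ)| with hd
  have hd0 : 0 ≤ d := abs_nonneg _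
  have hkq : k ≤ q := hk
  set t := q - k with ht
  have htq : t ≤ q := Nat.sub_le _ _
  have htc : (t : ℝ) = (q : ℝ) - (k : ℝ) := by
    rw [ht]; push_cast [Nat.cast_sub hkq]; ring
  -- key value identity
  have hval : p * ((t : ℝ) ^ 2 + (t : ℝ) * d) = p * ((m : ℝ) - k) * ((n : ℝ) - k) := by
    rcases le_total m n with h | h
    · have hq' : (q : ℝ) = m := by rw [hq, min_eq_left h]
      have hd' : d = (n : ℝ) - m := by
        rw [hd, abs_of_nonpos (by push_cast; linarith [(Nat.cast_le (α := ℝ)).mpr h])]; ring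
      rw [htc, hq', hd']; ring
    · have hq' : (q : ℝ) = n := by rw [hq, min_eq_right h]
      have hd' : d = (m : ℝ) - n := by
        rw [hd, abs_of_nonneg (by push_cast; linarith [(Nat.cast_le (α := ℝ)).mpr h])]
      rw [htc, hq', hd']; ring
  -- γ : the witness
  set γ : Fin q → ℝ := fun i => if (i : ℕ) < t then p else 0 with hγ
  have hγsum : ∑ i : Fin q, γ i = (t : ℝ) * p := by
    rw [hγ, Fin.sum_univ_eq_sum_range (fun i => if i < t then p else 0) q,
      sum_ite_range q t htq]
    simp [mul_comm]
  have hsumγc : ∑ i : Fin q, ((2 * (i : ℝ) + 1) + d) * γ i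
      = p * ((m : ℝ) - k) * ((n : ℝ) - k) := by
    have h1 : ∀ i : Fin q, ((2 * (i : ℝ) + 1) + d) * γ i
        = if (i : ℕ) < t then ((2 * (i : ℝ) + 1) + d) * p else 0 := by
      intro i; by_cases h : (i : ℕ) < t <;> simp [hγ, h]
    rw [Finset.sum_congr rfl fun i _ => h1 i,
      Fin.sum_univ_eq_sum_range
        (fun i => if i < t then ((2 * (i : ℝ) + 1) + d) * p else 0) q,
      sum_ite_range q t htq, ← Finset.sum_mul, sum_odd_add]
    rw [← hval]; ring
  constructor
  · -- membership
    refine ⟨γ, ?_, ?_, ?_, hsumγc.symm⟩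
    · intro i j hij
      have hij' : (i : ℕ) ≤ (j : ℕ) := hij
      rw [hγ]; dsimp only
      split_ifs <;> first | exact le_refl _ | exact hp.le | omega
    · intro i; rw [hγ]; dsimp only; split_ifs <;> simp [hp.le]
    · have h1 : ∀ i : Fin q, max (p - γ i) 0 = p - γ i := by
        intro i; rw [hγ]; dsimp only; split_ifs <;> simp [hp.le]
      rw [Finset.sum_congr rfl fun i _ => h1 i, Finset.sum_sub_distrib, hγsum,
        Finset.sum_const, Finset.card_univ, Fintype.card_fin, nsmul_eq_mul]
      rw [htc]; ring_nf; exact le_refl _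
  · -- lower bound
    rintro s ⟨α, hmono, hpos, hcon, rfl⟩
    set c : Fin q → ℝ := fun i => (2 * (i : ℝ) + 1) + d with hc
    set β : Fin q → ℝ := fun i => min (α i) p with hβ
    have hc0 : ∀ i : Fin q, 0 ≤ c i := by
      intro i; rw [hc]; have : (0:ℝ) ≤ (i : ℝ) := by positivity
      dsimp only; linarith
    have hβα : ∀ i, β i ≤ α i := fun i => min_le_left _ _
    have hβ0 : ∀ i : Fin q, 0 ≤ β i := fun i => le_min (hpos i) hp.le
    have hβp : ∀ i : Fin q, β i ≤ p := fun i => min_le_right _ _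
    have hpβ : ∀ i : Fin q, p - β i = max (p - α i) 0 := by
      intro i; rw [hβ]; dsimp only
      rcases le_total (α i) p with h | h
      · rw [min_eq_left h, max_eq_left (by linarith)]
      · rw [min_eq_right h, max_eq_right (by linarith)]; ring
    have hβsum : (t : ℝ) * p ≤ ∑ i : Fin q, β i := by
      have h1 : ∑ i : Fin q, (p - β i) ≤ (k : ℝ) * p := by
        rw [Finset.sum_congr rfl fun i _ => hpβ i]; exact hcon
      rw [Finset.sum_sub_distrib, Finset.sum_const, Finset.card_univ,
        Fintype.card_fin, nsmul_eq_mul] at h1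
      rw [htc]; nlinarith
    set cs : ℝ := 2 * (t : ℝ) + d with hcs
    have hcs0 : 0 ≤ cs := by rw [hcs]; positivity
    -- main inequality: ∑ cγ ≤ ∑ cβ
    have hmid : 0 ≤ ∑ i : Fin q, (c i - cs) * (β i - γ i) := by
      apply Finset.sum_nonneg
      intro i _
      by_cases h : (i : ℕ) < t
      · have hi : (i : ℝ) + 1 ≤ (t : ℝ) := by exact_mod_cast h
        have h1 : c i - cs ≤ 0 := by rw [hc, hcs]; dsimp only; linarith
        have h2 : β i - γ i ≤ 0 := by
          rw [hγ]; dsimp only; rw [if_pos h]; linarith [hβp i]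
        nlinarith [h1, h2]
      · have hi : (t : ℝ) ≤ (i : ℝ) := by exact_mod_cast Nat.le_of_not_lt h
        have h1 : 0 ≤ c i - cs := by rw [hc, hcs]; dsimp only; linarith
        have h2 : 0 ≤ β i - γ i := by
          rw [hγ]; dsimp only; rw [if_neg h]; linarith [hβ0 i]
        exact mul_nonneg h1 h2
    have htail : 0 ≤ ∑ i : Fin q, cs * (β i - γ i) := by
      rw [← Finset.mul_sum, Finset.sum_sub_distrib, hγsum]
      exact mul_nonneg hcs0 (by linarith)
    have hexp : ∑ i : Fin q, c i * β i
        = ∑ i : Fin q, c i * γ i + (∑ i : Fin q, (c i - cs) * (β i - γ i)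
          + ∑ i : Fin q, cs * (β i - γ i)) := by
      rw [← Finset.sum_add_distrib, ← Finset.sum_add_distrib]
      exact Finset.sum_congr rfl fun i _ => by ring
    have hγβ : ∑ i : Fin q, c i * γ i ≤ ∑ i : Fin q, c i * β i := by
      rw [hexp]; linarith
    have hβa : ∑ i : Fin q, c i * β i ≤ ∑ i : Fin q, c i * α i :=
      Finset.sum_le_sum fun i _ => mul_le_mul_of_nonneg_left (hβα i) (hc0 i)
    calc p * ((m : ℝ) - k) * ((n : ℝ) - k) = ∑ i : Fin q, c i * γ i := hsumγc.symm
      _ ≤ ∑ i : Fin q, c i * β i := hγβ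
      _ ≤ ∑ i : Fin q, c i * α i := hβa
end

section
/- For integers m,n ≥ 1 and real p > 0, the function r ↦ G_{m,n}(r,p) on [0, min(m,n)·p] is the piecewise linear function connecting the points (kp, p(m-k)(n-k)) for k = 0,1,...,min(m,n); i.e., for r ∈ [kp,(k+1)p], G_{m,n}(r,p) = p(m-k)(n-k) - (r-kp)(m+n-2k-1). -/
open Finset

lemma sum_id_real (t : ℕ) : ∑ i ∈ range t, (i:ℝ) = (t:ℝ)*((t:ℝ)-1)/2 := by
  induction t with
  | zero => simp
  | succ s ih => rw [Finset.sum_range_succ, ih]; push_cast; ring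

lemma sum_c_real (a : ℝ) (t : ℕ) : ∑ i ∈ range t, (2*(i:ℝ)+1+a) = (t:ℝ)^2 + (t:ℝ)*a := by
  induction t with
  | zero => simp
  | succ s ih => rw [Finset.sum_range_succ, ih]; push_cast; ring

lemma filter_lt_card (q i : ℕ) (h : i ≤ q) : (range q).filter (fun j => j < i) = range i := by
  ext x; simp only [mem_filter, mem_range]; omega

lemma filter_gt_eq (q j : ℕ) : (range q).filter (fun i => j < i) = Ico (j+1) q := by
  ext x; simp only [mem_filter, mem_range, mem_Ico]; omega

lemma greedy (q k : ℕ) (p r c0 : ℝ) (b : ℕ → ℝ) (hk : k < q) (hc0 : 0 ≤ c0)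
    (hp : 0 < p) (hb0 : ∀ i, 0 ≤ b i) (hbp : ∀ i, b i ≤ p)
    (hsum : ∑ i ∈ range q, b i ≤ r)
    (hr1 : (k:ℝ)*p ≤ r) (hr2 : r ≤ ((k:ℝ)+1)*p) :
    ∑ i ∈ range q, (c0 + 2*(i:ℝ)) * b i
      ≤ c0*r + p*(k:ℝ)*((k:ℝ)+1) + 2*((q:ℝ)-1-(k:ℝ))*r := by
  have hr0 : 0 ≤ r := le_trans (by positivity) hr1
  have step1 : ∑ i ∈ range q, (c0 + 2*(i:ℝ)) * b i
      = c0 * (∑ i ∈ range q, b i) + 2 * ∑ i ∈ range q, (i:ℝ) * b i := by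
    rw [mul_sum, mul_sum, ← sum_add_distrib]
    exact sum_congr rfl fun i _ => by ring
  have step2 : ∑ i ∈ range q, (i:ℝ) * b i
      = ∑ j ∈ range q, ∑ i ∈ range q, (if j < i then b i else 0) := by
    rw [Finset.sum_comm]
    refine sum_congr rfl fun i hi => ?_
    rw [← Finset.sum_filter, filter_lt_card q i (le_of_lt (mem_range.mp hi)),
      Finset.sum_const, Finset.card_range, nsmul_eq_mul]
  have step3 : ∀ j ∈ range q, (∑ i ∈ range q, (if j < i then b i else 0))
      ≤ min r (((q - (j+1) : ℕ):ℝ) * p) := by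
    intro j _
    refine le_min ?_ ?_
    · refine le_trans (sum_le_sum fun i _ => ?_) hsum
      split_ifs with h
      · exact le_refl _
      · exact hb0 i
    · rw [← Finset.sum_filter, filter_gt_eq]
      calc ∑ i ∈ Ico (j+1) q, b i ≤ ∑ _i ∈ Ico (j+1) q, p :=
            sum_le_sum fun i _ => hbp i
        _ = ((q - (j+1) : ℕ):ℝ) * p := by
            rw [Finset.sum_const, Nat.card_Ico, nsmul_eq_mul]
  have step4 : ∑ j ∈ range q, min r (((q - (j+1) : ℕ):ℝ) * p)
      = ∑ t ∈ range q, min r ((t:ℝ) * p) := by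
    rw [← Finset.sum_range_reflect (fun t => min r ((t:ℝ)*p)) q]
    refine sum_congr rfl fun j _ => ?_
    have : q - (j+1) = q - 1 - j := by omega
    rw [this]
  have hk1 : k + 1 ≤ q := hk
  have step5 : ∑ t ∈ range q, min r ((t:ℝ) * p)
      = (k:ℝ)*((k:ℝ)+1)/2 * p + ((q:ℝ)-(k:ℝ)-1) * r := by
    rw [range_eq_Ico, ← Finset.sum_Ico_consecutive _ (Nat.zero_le (k+1)) hk1]
    have h1 : ∑ t ∈ Ico 0 (k+1), min r ((t:ℝ)*p) = (k:ℝ)*((k:ℝ)+1)/2 * p := by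
      rw [← range_eq_Ico]
      have : ∀ t ∈ range (k+1), min r ((t:ℝ)*p) = (t:ℝ)*p := by
        intro t ht
        refine min_eq_right (le_trans ?_ hr1)
        have : (t:ℝ) ≤ (k:ℝ) := by exact_mod_cast Nat.lt_succ_iff.mp (mem_range.mp ht)
        nlinarith
      rw [sum_congr rfl this, ← Finset.sum_mul, sum_id_real]
      push_cast; ring
    have h2 : ∑ t ∈ Ico (k+1) q, min r ((t:ℝ)*p) = ((q:ℝ)-(k:ℝ)-1) * r := by
      have : ∀ t ∈ Ico (k+1) q, min r ((t:ℝ)*p) = r := by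
        intro t ht
        refine min_eq_left (le_trans hr2 ?_)
        have : (k:ℝ)+1 ≤ (t:ℝ) := by exact_mod_cast (mem_Ico.mp ht).1
        nlinarith
      rw [sum_congr rfl this, Finset.sum_const, Nat.card_Ico, nsmul_eq_mul]
      have : ((q - (k+1) : ℕ):ℝ) = (q:ℝ)-(k:ℝ)-1 := by
        rw [Nat.cast_sub hk1]; push_cast; ring
      rw [this]
    rw [h1, h2]
  have hsb : c0 * (∑ i ∈ range q, b i) ≤ c0 * r := mul_le_mul_of_nonneg_left hsum hc0
  have hts : ∑ i ∈ range q, (i:ℝ) * b i ≤ (k:ℝ)*((k:ℝ)+1)/2 * p + ((q:ℝ)-(k:ℝ)-1) * r := by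
    rw [step2, ← step5, ← step4]
    exact sum_le_sum step3
  rw [step1]; linarith

/-- The MIMO diversity exponent `G_{m,n}(r,p)`: infimum of the weighted sum
`∑ (2i-1+|m-n|) α_i` over nonincreasing nonnegative tuples with `∑ (p-α_i)^+ ≤ r`
(closure of the constraint set). -/
noncomputable def G (m n : ℕ) (r p : ℝ) : ℝ :=
  sInf { s : ℝ | ∃ α : Fin (min m n) → ℝ,
    (∀ i j : Fin (min m n), i ≤ j → α j ≤ α i) ∧
    (∀ i, 0 ≤ α i) ∧
    (∑ i, max (p - α i) 0) ≤ r ∧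
    s = ∑ i : Fin (min m n), ((2 * (i : ℝ) + 1) + |(m : ℝ) - (n : ℝ)|) * α i }

/-- G is the piecewise linear curve connecting (kp, p(m-k)(n-k)). -/
theorem stmt1 (m n : ℕ) (hm : 1 ≤ m) (hn : 1 ≤ n) (p : ℝ) (hp : 0 < p) :
    ∀ k : ℕ, k < min m n →
      ∀ r ∈ Set.Icc ((k : ℝ) * p) (((k : ℝ) + 1) * p),
        G m n r p = p * ((m : ℝ) - k) * ((n : ℝ) - k)
          - (r - (k : ℝ) * p) * ((m : ℝ) + (n : ℝ) - 2 * (k : ℝ) - 1) := by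
  intro k hk r hr
  obtain ⟨hr1, hr2⟩ := hr
  unfold G
  set q := min m n with hq
  set a := |(m : ℝ) - (n : ℝ)| with ha
  set V := p * ((m : ℝ) - k) * ((n : ℝ) - k)
    - (r - (k : ℝ) * p) * ((m : ℝ) + (n : ℝ) - 2 * (k : ℝ) - 1) with hV
  have ha0 : 0 ≤ a := abs_nonneg _
  have hkq : k < q := hk
  have hk1 : k + 1 ≤ q := hkq
  have hrk0 : 0 ≤ r - (k:ℝ)*p := by linarith
  have hrkp : r - (k:ℝ)*p ≤ p := by linarith
  have key : ((q:ℝ) = m ∧ a = (n:ℝ)-(m:ℝ)) ∨ ((q:ℝ) = n ∧ a = (m:ℝ)-(n:ℝ)) := by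
    rcases le_total m n with h | h
    · left
      exact ⟨by rw [hq, Nat.min_eq_left h],
        by rw [ha, abs_of_nonpos (sub_nonpos.mpr (Nat.cast_le.mpr h))]; ring⟩
    · right
      exact ⟨by rw [hq, Nat.min_eq_right h],
        by rw [ha, abs_of_nonneg (sub_nonneg.mpr (Nat.cast_le.mpr h))]⟩
  -- Membership: the explicit optimal vector
  have hmem : V ∈ { s : ℝ | ∃ α : Fin q → ℝ,
      (∀ i j : Fin q, i ≤ j → α j ≤ α i) ∧
      (∀ i, 0 ≤ α i) ∧
      (∑ i, max (p - α i) 0) ≤ r ∧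
      s = ∑ i : Fin q, ((2 * (i : ℝ) + 1) + a) * α i } := by
    set j0 := q - k - 1 with hj0
    have hj0q : j0 < q := by omega
    have hj01 : j0 + 1 ≤ q := hj0q
    have hqj : q - (j0+1) = k := by omega
    set A : ℕ → ℝ := fun i => if i < j0 then p else if i = j0 then p - (r - (k:ℝ)*p) else 0
      with hA
    refine ⟨fun i => A i, ?_, ?_, ?_, ?_⟩
    · intro i j hij
      have hij' : (i:ℕ) ≤ (j:ℕ) := hij
      simp only [hA]
      split_ifs <;> first | linarith | omega
    · intro i
      simp only [hA]
      split_ifs <;> linarith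
    · have hpt : ∀ i ∈ range q, max (p - A i) 0
          = (if i = j0 then r - (k:ℝ)*p else 0) + (if j0 < i then p else 0) := by
        intro i _
        simp only [hA]
        rcases lt_trichotomy i j0 with h | h | h
        · rw [if_pos h, if_neg (by omega), if_neg (by omega)]
          simp
        · subst h
          rw [if_neg (lt_irrefl _), if_pos rfl, if_pos rfl, if_neg (lt_irrefl _)]
          have h2 : p - (p - (r - (k:ℝ)*p)) = r - (k:ℝ)*p := by ring
          rw [h2, max_eq_left hrk0, add_zero]
        · rw [if_neg (by omega), if_neg (by omega), if_neg (by omega), if_pos h]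
          rw [sub_zero, zero_add, max_eq_left hp.le]
      calc ∑ i : Fin q, max (p - A i) 0
          = ∑ i ∈ range q, max (p - A i) 0 :=
            Fin.sum_univ_eq_sum_range (fun i => max (p - A i) 0) q
        _ = ∑ i ∈ range q, ((if i = j0 then r - (k:ℝ)*p else 0) + (if j0 < i then p else 0)) :=
            sum_congr rfl hpt
        _ = r := by
            rw [sum_add_distrib, Finset.sum_ite_eq' (range q) j0 (fun _ => r - (k:ℝ)*p),
              if_pos (mem_range.mpr hj0q), ← Finset.sum_filter, filter_gt_eq,
              Finset.sum_const, Nat.card_Ico, hqj, nsmul_eq_mul]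
            ring
        _ ≤ r := le_rfl
    · have hpt : ∀ i ∈ range q, ((2 * (i:ℝ) + 1) + a) * A i
          = (if i < j0 + 1 then p * (2 * (i:ℝ) + 1 + a) else 0)
            + (if i = j0 then -((r - (k:ℝ)*p) * (2 * (i:ℝ) + 1 + a)) else 0) := by
        intro i _
        simp only [hA]
        rcases lt_trichotomy i j0 with h | h | h
        · rw [if_pos h, if_pos (by omega), if_neg (by omega)]
          ring
        · subst h
          rw [if_neg (lt_irrefl _), if_pos rfl, if_pos (by omega), if_pos rfl]
          ring
        · rw [if_neg (by omega), if_neg (by omega), if_neg (by omega), if_neg (by omega)]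
          ring
      have hcast1 : ((j0 + 1 : ℕ):ℝ) = (q:ℝ) - (k:ℝ) := by
        have : j0 + 1 = q - k := by omega
        rw [this, Nat.cast_sub (le_of_lt hkq)]
      have hcast0 : (j0:ℝ) = (q:ℝ) - (k:ℝ) - 1 := by
        have h1 : ((j0:ℝ)) + 1 = (q:ℝ) - (k:ℝ) := by exact_mod_cast hcast1
        linarith
      have hsum : ∑ i : Fin q, ((2 * (i:ℝ) + 1) + a) * A i
          = p * (((q:ℝ)-(k:ℝ))^2 + ((q:ℝ)-(k:ℝ)) * a)
            - (r - (k:ℝ)*p) * (2 * ((q:ℝ)-(k:ℝ)-1) + 1 + a) := by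
        calc ∑ i : Fin q, ((2 * (i:ℝ) + 1) + a) * A i
            = ∑ i ∈ range q, ((2 * (i:ℝ) + 1) + a) * A i :=
              Fin.sum_univ_eq_sum_range (fun i => ((2 * (i:ℝ) + 1) + a) * A i) q
          _ = ∑ i ∈ range q, ((if i < j0 + 1 then p * (2 * (i:ℝ) + 1 + a) else 0)
                + (if i = j0 then -((r - (k:ℝ)*p) * (2 * (i:ℝ) + 1 + a)) else 0)) :=
              sum_congr rfl hpt
          _ = _ := by
              rw [sum_add_distrib, ← Finset.sum_filter, filter_lt_card q (j0+1) hj01,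
                Finset.sum_ite_eq' (range q) j0
                  (fun i => -((r - (k:ℝ)*p) * (2 * (i:ℝ) + 1 + a))),
                if_pos (mem_range.mpr hj0q), ← Finset.mul_sum, sum_c_real, hcast1, hcast0]
              ring
      rw [hsum, hV]
      rcases key with ⟨h1, h2⟩ | ⟨h1, h2⟩ <;> rw [h1, h2] <;> ring
  -- Lower bound: every feasible vector has cost at least V
  have hlb : ∀ s ∈ { s : ℝ | ∃ α : Fin q → ℝ,
      (∀ i j : Fin q, i ≤ j → α j ≤ α i) ∧
      (∀ i, 0 ≤ α i) ∧
      (∑ i, max (p - α i) 0) ≤ r ∧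
      s = ∑ i : Fin q, ((2 * (i : ℝ) + 1) + a) * α i }, V ≤ s := by
    rintro s ⟨α, hmono, hpos, hcon, rfl⟩
    set A : ℕ → ℝ := fun i => if h : i < q then α ⟨i, h⟩ else 0 with hA
    have hAeq : ∀ i : Fin q, A (i : ℕ) = α i := by
      intro i
      simp only [hA]
      rw [dif_pos i.isLt]
    have hA0 : ∀ i, 0 ≤ A i := by
      intro i
      simp only [hA]
      split_ifs with h
      · exact hpos _
      · exact le_rfl
    set b : ℕ → ℝ := fun i => max (p - A i) 0 with hb
    have hb0 : ∀ i, 0 ≤ b i := fun i => le_max_right _ _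
    have hbp : ∀ i, b i ≤ p := by
      intro i
      simp only [hb]
      rcases le_total (p - A i) 0 with h | h
      · rw [max_eq_right h]; exact hp.le
      · rw [max_eq_left h]; linarith [hA0 i]
    have hbsum : ∑ i ∈ range q, b i ≤ r := by
      rw [← Fin.sum_univ_eq_sum_range b q]
      calc ∑ i : Fin q, b (i:ℕ) = ∑ i : Fin q, max (p - α i) 0 := by
            refine Finset.sum_congr rfl fun i _ => ?_
            simp only [hb]
            rw [hAeq i]
        _ ≤ r := hcon
    have hstep : ∀ i ∈ range q, (2 * (i:ℝ) + 1 + a) * (p - b i) ≤ (2 * (i:ℝ) + 1 + a) * A i := by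
      intro i _
      refine mul_le_mul_of_nonneg_left ?_ (by positivity)
      have := le_max_left (p - A i) (0:ℝ)
      simp only [hb]; linarith
    have hmain : ∑ i : Fin q, ((2 * (i : ℝ) + 1) + a) * α i
        = ∑ i ∈ range q, (2 * (i:ℝ) + 1 + a) * A i := by
      rw [← Fin.sum_univ_eq_sum_range (fun i => (2 * (i:ℝ) + 1 + a) * A i) q]
      exact Finset.sum_congr rfl fun i _ => by rw [hAeq i]
    have hlow : ∑ i ∈ range q, (2 * (i:ℝ) + 1 + a) * (p - b i)
        ≤ ∑ i ∈ range q, (2 * (i:ℝ) + 1 + a) * A i := sum_le_sum hstep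
    have hsplit : ∑ i ∈ range q, (2 * (i:ℝ) + 1 + a) * (p - b i)
        = p * ((q:ℝ)^2 + (q:ℝ)*a) - ∑ i ∈ range q, ((1+a) + 2*(i:ℝ)) * b i := by
      rw [eq_sub_iff_add_eq, ← sum_add_distrib, ← sum_c_real a q, Finset.mul_sum]
      exact Finset.sum_congr rfl fun i _ => by ring
    have hgreedy := greedy q k p r (1+a) b hkq (by linarith) hp hb0 hbp hbsum hr1 hr2
    have hfin : p * ((q:ℝ)^2 + (q:ℝ)*a)
        - ((1+a)*r + p*(k:ℝ)*((k:ℝ)+1) + 2*((q:ℝ)-1-(k:ℝ))*r)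
        = V := by
      rw [hV]
      rcases key with ⟨h1, h2⟩ | ⟨h1, h2⟩ <;> rw [h1, h2] <;> ring
    rw [hmain]
    linarith
  exact le_antisymm (csInf_le ⟨V, hlb⟩ hmem) (le_csInf ⟨V, hmem⟩ hlb)
end

section
/- For integers m,n ≥ 1 and any real t with 0 ≤ t < min(m,n), G_{m,n}(t, 1+mn) ≥ mn + G_{m,n}(t, 1). -/
/-!
Raising the power level from `p` to `p + P` costs at least `P` in the diversity exponent.
Given an admissible `α` at level `p + P`, split each coordinate as
`α i = (α i - P)⁺ + min (α i) P`. The first part is admissible at level `p`, so its cost is at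
least `G m n t p`. For the second part, if no `α i` reaches `P` then every outage term is
positive and `∑ α i ≥ k (p + P) - t > k P` with `k = min m n`, because `t < k p`; either way
`∑ min (α i) P ≥ P`, and all weights are at least `1`.
-/

open Finset

-- `Fin` is 0-based, so this is the paper's weight `2i - 1 + |m - n|`.
def diversityWeight (m n : ℕ) (i : Fin (min m n)) : ℝ :=
  (2 * (i : ℝ) + 1) + |(m : ℝ) - (n : ℝ)|

lemma one_le_diversityWeight (m n : ℕ) (i : Fin (min m n)) : 1 ≤ diversityWeight m n i := by
  unfold diversityWeight
  have := abs_nonneg ((m : ℝ) - n)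
  have : (0 : ℝ) ≤ (i : ℕ) := Nat.cast_nonneg _
  linarith

section G

variable {m n : ℕ} {r p : ℝ}

lemma G_le_of_admissible {α : Fin (min m n) → ℝ} (hmono : ∀ i j, i ≤ j → α j ≤ α i)
    (hpos : ∀ i, 0 ≤ α i) (hsum : ∑ i, max (p - α i) 0 ≤ r) :
    G m n r p ≤ ∑ i, diversityWeight m n i * α i := by
  refine csInf_le ⟨0, ?_⟩ ⟨α, hmono, hpos, hsum, rfl⟩
  rintro s ⟨β, -, hβ, -, rfl⟩
  exact sum_nonneg fun i _ =>
    mul_nonneg (zero_le_one.trans (one_le_diversityWeight m n i)) (hβ i)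

lemma le_G_of_forall_admissible {a : ℝ} (hr : 0 ≤ r)
    (h : ∀ α : Fin (min m n) → ℝ, (∀ i j, i ≤ j → α j ≤ α i) → (∀ i, 0 ≤ α i) →
      ∑ i, max (p - α i) 0 ≤ r → a ≤ ∑ i, diversityWeight m n i * α i) :
    a ≤ G m n r p := by
  refine le_csInf ⟨_, fun _ => max p 0, fun _ _ _ => le_rfl, fun _ => le_max_right _ _, ?_, rfl⟩ ?_
  · simpa using hr
  · rintro s ⟨α, hmono, hpos, hsum, rfl⟩
    exact h α hmono hpos hsum

end G

lemma max_sub_posPart_sub_le (p P a : ℝ) :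
    max (p - max (a - P) 0) 0 ≤ max (p + P - a) 0 := by
  rcases le_total a P with h | h
  · rw [max_eq_right (by linarith : a - P ≤ 0)]
    exact max_le_max (by linarith) le_rfl
  · rw [max_eq_left (by linarith : 0 ≤ a - P)]
    exact le_of_eq (by ring_nf)

lemma max_sub_zero_add_min_self (a P : ℝ) : max (a - P) 0 + min a P = a := by
  rcases le_total a P with h | h
  · rw [max_eq_right (by linarith), min_eq_left h, zero_add]
  · rw [max_eq_left (by linarith), min_eq_right h, sub_add_cancel]

lemma le_sum_min_of_sum_posPart_le {ι : Type*} [Fintype ι] {α : ι → ℝ} {p P t : ℝ}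
    (hP : 0 ≤ P) (hpos : ∀ i, 0 ≤ α i) (hsum : ∑ i, max (p + P - α i) 0 ≤ t)
    (ht0 : 0 ≤ t) (ht : t < Fintype.card ι * p) :
    P ≤ ∑ i, min (α i) P := by
  by_cases hsmall : ∀ i, α i < P
  · have hcard : (1 : ℝ) ≤ Fintype.card ι := by
      rcases Nat.eq_zero_or_pos (Fintype.card ι) with h0 | h0
      · rw [h0, Nat.cast_zero, zero_mul] at ht
        linarith
      · exact Nat.one_le_cast.mpr h0
    have houtage : Fintype.card ι * (p + P) - ∑ i, α i ≤ t := by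
      calc Fintype.card ι * (p + P) - ∑ i, α i = ∑ i, (p + P - α i) := by
            simp [sum_sub_distrib, mul_add]
        _ ≤ ∑ i, max (p + P - α i) 0 := sum_le_sum fun i _ => le_max_left _ _
        _ ≤ t := hsum
    calc P ≤ Fintype.card ι * P := le_mul_of_one_le_left hP hcard
      _ ≤ ∑ i, α i := by linarith
      _ = ∑ i, min (α i) P := sum_congr rfl fun i _ => (min_eq_left (hsmall i).le).symm
  · obtain ⟨i, hi⟩ := not_forall.mp hsmall
    rw [not_lt] at hi
    calc P = min (α i) P := (min_eq_right hi).symm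
      _ ≤ ∑ j, min (α j) P := single_le_sum (fun j _ => le_min (hpos j) hP) (mem_univ i)

theorem add_G_le_G_add {m n : ℕ} {t p P : ℝ} (hP : 0 ≤ P) (ht0 : 0 ≤ t)
    (ht : t < ((min m n : ℕ) : ℝ) * p) :
    P + G m n t p ≤ G m n t (p + P) := by
  refine le_G_of_forall_admissible ht0 fun α hmono hpos hsum => ?_
  set β : Fin (min m n) → ℝ := fun i => max (α i - P) 0
  have hβ : G m n t p ≤ ∑ i, diversityWeight m n i * β i := by
    refine G_le_of_admissible (fun i j hij => max_le_max (by linarith [hmono i j hij]) le_rfl)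
      (fun i => le_max_right _ _) ?_
    exact (sum_le_sum fun i _ => max_sub_posPart_sub_le p P (α i)).trans hsum
  have hmin : P ≤ ∑ i, diversityWeight m n i * min (α i) P := by
    refine (le_sum_min_of_sum_posPart_le hP hpos hsum ht0 (by simpa using ht)).trans ?_
    exact sum_le_sum fun i _ =>
      le_mul_of_one_le_left (le_min (hpos i) hP) (one_le_diversityWeight m n i)
  have hsplit : ∑ i, diversityWeight m n i * α i
      = ∑ i, diversityWeight m n i * β i + ∑ i, diversityWeight m n i * min (α i) P := by
    rw [← sum_add_distrib]
    refine sum_congr rfl fun i _ => ?_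
    rw [← mul_add, max_sub_zero_add_min_self]
  linarith

theorem stmt3_general (m n : ℕ) (t : ℝ)
    (ht0 : 0 ≤ t) (ht : t < ((min m n : ℕ) : ℝ)) :
    G m n t (1 + (m : ℝ) * n) ≥ (m : ℝ) * n + G m n t 1 :=
  add_G_le_G_add (by positivity) ht0 (by simpa using ht)

/-- for 0 ≤ t < min(m,n), G(t,1+mn) ≥ mn + G(t,1). -/
theorem stmt3 (m n : ℕ) (hm : 1 ≤ m) (hn : 1 ≤ n) (t : ℝ)
    (ht0 : 0 ≤ t) (ht : t < ((min m n : ℕ) : ℝ)) :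
    G m n t (1 + (m : ℝ) * n) ≥ (m : ℝ) * n + G m n t 1 :=
  stmt3_general m n t ht0 ht
end

section
/- Fix integers m,n,L ≥ 1 and multiplexing gains r = (r_1,...,r_L) with ∑_{i∈S} r_i < min(|S|m, n) for every nonempty S ⊆ {1,...,L}. Define D(r,p) = min over nonempty S of G_{|S|m,n}(∑_{i∈S} r_i, p) for a common power exponent p > 0, and the recursion C_j(r) = 0 for j=0 and C_j(r) = D(r, 1 + C_{j-1}(r)) for j ≥ 1. Then the sequence (C_j(r))_{j≥0} is strictly increasing. -/
/-!
Shrinking every coordinate of an `α` feasible at exponent `p'` by `p' - p` (clipping at `0`)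
gives a point feasible at exponent `p`, and since every weight is at least `1` this lowers the
objective by at least `(p' - p) / p' * (min m n * p' - r)`. Hence `G` is strictly increasing
in `p` as soon as `r < min m n * p'`, and so is the finite minimum `D`. Together with
`D(r, 1) ≥ min (|S| m) n - ∑_{i ∈ S} r_i > 0`, induction gives `0 ≤ C j < C (j + 1)`.
-/

open Finset

noncomputable def D (L m n : ℕ) (r : Fin L → ℝ) (p : ℝ) : ℝ :=
  sInf { d : ℝ | ∃ S : Finset (Fin L), S.Nonempty ∧
    d = G (S.card * m) n (∑ i ∈ S, r i) p }

noncomputable def divWeight (m n : ℕ) (i : Fin (min m n)) : ℝ :=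
  2 * (i : ℝ) + 1 + |(m : ℝ) - (n : ℝ)|

def IsFeasible (m n : ℕ) (r p : ℝ) (α : Fin (min m n) → ℝ) : Prop :=
  Antitone α ∧ (∀ i, 0 ≤ α i) ∧ ∑ i, max (p - α i) 0 ≤ r

section G

variable {m n : ℕ} {r p p' : ℝ} {α : Fin (min m n) → ℝ}

lemma one_le_divWeight (i : Fin (min m n)) : 1 ≤ divWeight m n i := by
  unfold divWeight
  linarith [abs_nonneg ((m : ℝ) - n), (Nat.cast_nonneg i : (0 : ℝ) ≤ i)]

lemma G_eq_sInf_image (m n : ℕ) (r p : ℝ) :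
    G m n r p =
      sInf ((fun α => ∑ i, divWeight m n i * α i) '' {α | IsFeasible m n r p α}) := by
  unfold G
  congr 1
  ext s
  constructor
  · rintro ⟨α, hanti, hnonneg, hsum, rfl⟩
    exact ⟨α, ⟨hanti, hnonneg, hsum⟩, rfl⟩
  · rintro ⟨α, ⟨hanti, hnonneg, hsum⟩, rfl⟩
    exact ⟨α, hanti, hnonneg, hsum, rfl⟩

lemma isFeasible_const (hp : 0 ≤ p) (hr : 0 ≤ r) : IsFeasible m n r p fun _ => p :=
  ⟨antitone_const, fun _ => hp, by simpa using hr⟩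

lemma IsFeasible.sum_divWeight_mul_nonneg (hα : IsFeasible m n r p α) :
    0 ≤ ∑ i, divWeight m n i * α i :=
  sum_nonneg fun i _ => mul_nonneg (zero_le_one.trans (one_le_divWeight i)) (hα.2.1 i)

lemma G_le (hα : IsFeasible m n r p α) : G m n r p ≤ ∑ i, divWeight m n i * α i := by
  rw [G_eq_sInf_image]
  exact csInf_le ⟨0, Set.forall_mem_image.2 fun _ hβ => hβ.sum_divWeight_mul_nonneg⟩
    (Set.mem_image_of_mem _ hα)

lemma le_G {b : ℝ} (hp : 0 ≤ p) (hr : 0 ≤ r)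
    (h : ∀ α, IsFeasible m n r p α → b ≤ ∑ i, divWeight m n i * α i) :
    b ≤ G m n r p := by
  rw [G_eq_sInf_image]
  exact le_csInf ⟨_, Set.mem_image_of_mem _ (isFeasible_const (m := m) (n := n) hp hr)⟩
    (Set.forall_mem_image.2 h)

lemma IsFeasible.card_mul_sub_le_sum_min (hα : IsFeasible m n r p α) :
    (min m n : ℕ) * p - r ≤ ∑ i, min (α i) p := by
  have hmin : ∀ i, min (α i) p = p - max (p - α i) 0 := fun i => by
    rcases le_total (α i) p with h | h
    · rw [min_eq_left h, max_eq_left (sub_nonneg.2 h)]; ring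
    · rw [min_eq_right h, max_eq_right (sub_nonpos.2 h)]; ring
  rw [sum_congr rfl fun i _ => hmin i, sum_sub_distrib, sum_const, card_univ,
    Fintype.card_fin, nsmul_eq_mul]
  linarith [hα.2.2]

lemma card_mul_sub_le_G (hp : 0 ≤ p) (hr : 0 ≤ r) : (min m n : ℕ) * p - r ≤ G m n r p :=
  le_G hp hr fun _ hα => hα.card_mul_sub_le_sum_min.trans <| sum_le_sum fun i _ =>
    (min_le_left _ _).trans (le_mul_of_one_le_left (hα.2.1 i) (one_le_divWeight i))

lemma IsFeasible.shift (hα : IsFeasible m n r p' α) (p : ℝ) :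
    IsFeasible m n r p fun i => max (α i - (p' - p)) 0 := by
  refine ⟨fun i j hij => max_le_max (sub_le_sub_right (hα.1 hij) _) le_rfl,
    fun i => le_max_right _ _, le_trans (sum_le_sum fun i _ => ?_) hα.2.2⟩
  exact max_le_max (by linarith [le_max_left (α i - (p' - p)) 0]) le_rfl

lemma div_mul_min_le_sub_max {a d q : ℝ} (ha : 0 ≤ a) (hd : 0 ≤ d) (hdq : d ≤ q)
    (hq : 0 < q) :
    d / q * min a q ≤ a - max (a - d) 0 := by
  have hdq' : d / q ≤ 1 := (div_le_one hq).2 hdq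
  rcases le_total a d with h | h
  · rw [max_eq_right (sub_nonpos.2 h)]
    calc d / q * min a q ≤ 1 * a :=
          mul_le_mul hdq' (min_le_left _ _) (le_min ha hq.le) zero_le_one
      _ = a - 0 := by ring
  · rw [max_eq_left (sub_nonneg.2 h)]
    calc d / q * min a q ≤ d / q * q := by gcongr; exact min_le_right _ _
      _ = a - (a - d) := by field_simp; ring

lemma G_lt_G (hr : 0 ≤ r) (hp : 0 < p) (hpp : p < p') (hrp : r < (min m n : ℕ) * p') :
    G m n r p < G m n r p' := by
  have hp' : 0 < p' := hp.trans hpp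
  set q := (p' - p) / p'
  have hq : 0 < q := div_pos (sub_pos.2 hpp) hp'
  suffices G m n r p + q * ((min m n : ℕ) * p' - r) ≤ G m n r p' by
    linarith [mul_pos hq (sub_pos.2 hrp)]
  refine le_G hp'.le hr fun α hα => ?_
  calc G m n r p + q * ((min m n : ℕ) * p' - r)
      ≤ ∑ i, divWeight m n i * max (α i - (p' - p)) 0 + q * ∑ i, min (α i) p' :=
        add_le_add (G_le (hα.shift p))
          (mul_le_mul_of_nonneg_left hα.card_mul_sub_le_sum_min hq.le)
    _ ≤ ∑ i, divWeight m n i * α i := by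
        rw [mul_sum, ← sum_add_distrib]
        refine sum_le_sum fun i _ => ?_
        have hgap := div_mul_min_le_sub_max (hα.2.1 i) (sub_pos.2 hpp).le (by linarith) hp'
        have hcut : 0 ≤ α i - max (α i - (p' - p)) 0 :=
          sub_nonneg.2 (max_le (by linarith) (hα.2.1 i))
        linarith [le_mul_of_one_le_left hcut (one_le_divWeight i)]

end G

section D

variable {L m n : ℕ} {r : Fin L → ℝ} {p p' : ℝ}

lemma D_set_finite (L m n : ℕ) (r : Fin L → ℝ) (p : ℝ) :
    {d : ℝ | ∃ S : Finset (Fin L), S.Nonempty ∧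
      d = G (#S * m) n (∑ i ∈ S, r i) p}.Finite :=
  (Set.finite_range fun S : Finset (Fin L) => G (#S * m) n (∑ i ∈ S, r i) p).subset
    (by rintro _ ⟨S, _, rfl⟩; exact ⟨S, rfl⟩)

lemma D_le {S : Finset (Fin L)} (hS : S.Nonempty) :
    D L m n r p ≤ G (#S * m) n (∑ i ∈ S, r i) p :=
  csInf_le (D_set_finite L m n r p).bddBelow ⟨S, hS, rfl⟩

lemma exists_D_eq (hL : 0 < L) :
    ∃ S : Finset (Fin L), S.Nonempty ∧ D L m n r p = G (#S * m) n (∑ i ∈ S, r i) p := by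
  refine Set.Nonempty.csInf_mem ?_ (D_set_finite L m n r p)
  exact ⟨_, univ, ⟨⟨0, hL⟩, mem_univ _⟩, rfl⟩

lemma D_pos (hL : 0 < L) (hr0 : ∀ i, 0 ≤ r i) (hp : 0 ≤ p)
    (hr : ∀ S : Finset (Fin L), S.Nonempty →
      ∑ i ∈ S, r i < ((min (#S * m) n : ℕ) : ℝ) * p) :
    0 < D L m n r p := by
  obtain ⟨S, hS, hDS⟩ := exists_D_eq (m := m) (n := n) (r := r) (p := p) hL
  rw [hDS]
  linarith [card_mul_sub_le_G (m := #S * m) (n := n) (r := ∑ i ∈ S, r i) hp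
    (sum_nonneg fun i _ => hr0 i), hr S hS]

lemma D_lt_D (hL : 0 < L) (hr0 : ∀ i, 0 ≤ r i) (hp : 0 < p) (hpp : p < p')
    (hr : ∀ S : Finset (Fin L), S.Nonempty →
      ∑ i ∈ S, r i < ((min (#S * m) n : ℕ) : ℝ) * p') :
    D L m n r p < D L m n r p' := by
  obtain ⟨S, hS, hDS⟩ := exists_D_eq (m := m) (n := n) (r := r) (p := p') hL
  rw [hDS]
  exact (D_le hS).trans_lt (G_lt_G (sum_nonneg fun i _ => hr0 i) hp hpp (hr S hS))

end D

lemma strictMono_of_succ_eq_apply_one_add {f : ℝ → ℝ} (hf : StrictMonoOn f (Set.Ici 1))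
    (hf1 : 0 < f 1) {C : ℕ → ℝ} (hC0 : C 0 = 0) (hC : ∀ j, C (j + 1) = f (1 + C j)) :
    StrictMono C := by
  have key : ∀ j, 0 ≤ C j ∧ C j < C (j + 1) := by
    intro j
    induction j with
    | zero => rw [hC 0, hC0, add_zero]; exact ⟨le_rfl, hf1⟩
    | succ j ih =>
      obtain ⟨hnonneg, hlt⟩ := ih
      refine ⟨hnonneg.trans hlt.le, ?_⟩
      calc C (j + 1) = f (1 + C j) := hC j
        _ < f (1 + C (j + 1)) := hf (Set.mem_Ici.2 (by linarith))
            (Set.mem_Ici.2 (by linarith)) (by linarith)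
        _ = C (j + 1 + 1) := (hC _).symm
  exact strictMono_nat_of_lt_succ fun j => (key j).2

theorem stmt5_general (L m n : ℕ) (hL : 1 ≤ L)
    (r : Fin L → ℝ) (hr0 : ∀ i, 0 ≤ r i)
    (hr : ∀ S : Finset (Fin L), S.Nonempty → ∑ i ∈ S, r i < ((min (S.card * m) n : ℕ) : ℝ))
    (C : ℕ → ℝ) (hC0 : C 0 = 0) (hC : ∀ j, C (j + 1) = D L m n r (1 + C j)) :
    StrictMono C := by
  have hr_mul : ∀ p : ℝ, 1 ≤ p → ∀ S : Finset (Fin L), S.Nonempty →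
      ∑ i ∈ S, r i < ((min (#S * m) n : ℕ) : ℝ) * p := fun p hp S hS =>
    (hr S hS).trans_le (le_mul_of_one_le_right (Nat.cast_nonneg _) hp)
  refine strictMono_of_succ_eq_apply_one_add (fun p hp p' hp' hpp => ?_)
    (D_pos hL hr0 zero_le_one (hr_mul 1 le_rfl)) hC0 hC
  exact D_lt_D hL hr0 (zero_lt_one.trans_le hp) hpp (hr_mul p' hp')

/-- the perfect-feedback diversity recursion is strictly increasing. -/
theorem stmt5 (L m n : ℕ) (hL : 1 ≤ L) (hm : 1 ≤ m) (hn : 1 ≤ n)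
    (r : Fin L → ℝ) (hr0 : ∀ i, 0 ≤ r i)
    (hr : ∀ S : Finset (Fin L), S.Nonempty → ∑ i ∈ S, r i < ((min (S.card * m) n : ℕ) : ℝ))
    (C : ℕ → ℝ) (hC0 : C 0 = 0) (hC : ∀ j, C (j + 1) = D L m n r (1 + C j)) :
    StrictMono C :=
  stmt5_general L m n hL r hr0 hr C hC0 hC
end

section
/- Let d_opt^K = min(C̄_K, mn + C̄_1) with C̄_j as in the noisy-feedback recursion at zero multiplexing gain (C̄_0 = 0, C̄_j = mn(1+min(mn,C̄_{j-1}))). Then d_opt^1 = mn and d_opt^K = 2mn for every K ≥ 2. -/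
/-!
Since `C̄ⱼ ≥ 0`, every step of the recursion multiplies by at least `1`, so `C̄ⱼ ≥ mn` for `j ≥ 1`.
Hence the `min` saturates from the second step on: `C̄₁ = mn` and `C̄ₖ = mn (1 + mn)` for `K ≥ 2`,
and `mn (1 + mn) ≥ 2 mn` because `mn` is a natural number.
-/

section FeedbackRecursion

variable {c : ℝ} {C : ℕ → ℝ}

theorem feedbackRecursion_nonneg (hc : 0 ≤ c) (h0 : C 0 = 0)
    (hrec : ∀ j, C (j + 1) = (1 + min c (C j)) * c) (j : ℕ) : 0 ≤ C j := by
  induction j with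
  | zero => exact h0.ge
  | succ j ih =>
    rw [hrec j]
    exact mul_nonneg (by positivity) hc

theorem feedbackRecursion_one (hc : 0 ≤ c) (h0 : C 0 = 0)
    (hrec : ∀ j, C (j + 1) = (1 + min c (C j)) * c) : C 1 = c := by
  rw [hrec 0, h0, min_eq_right hc, add_zero, one_mul]

theorem le_feedbackRecursion_succ (hc : 0 ≤ c) (h0 : C 0 = 0)
    (hrec : ∀ j, C (j + 1) = (1 + min c (C j)) * c) (j : ℕ) : c ≤ C (j + 1) := by
  have hmin : 0 ≤ min c (C j) := le_min hc (feedbackRecursion_nonneg hc h0 hrec j)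
  rw [hrec j]
  nlinarith

theorem feedbackRecursion_add_two (hc : 0 ≤ c) (h0 : C 0 = 0)
    (hrec : ∀ j, C (j + 1) = (1 + min c (C j)) * c) (j : ℕ) : C (j + 2) = (1 + c) * c := by
  rw [hrec (j + 1), min_eq_left (le_feedbackRecursion_succ hc h0 hrec j)]

end FeedbackRecursion

theorem two_mul_le_one_add_mul_self_natCast (k : ℕ) : 2 * (k : ℝ) ≤ (1 + k) * k := by
  rcases k with _ | k
  · simp
  · push_cast
    nlinarith

theorem stmt8_general (m n : ℕ)
    (Cbar : ℕ → ℝ) (h0 : Cbar 0 = 0)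
    (hrec : ∀ j, Cbar (j + 1) = (1 + min ((m : ℝ) * n) (Cbar j)) * ((m : ℝ) * n))
    (dopt : ℕ → ℝ) (hd : ∀ K, dopt K = min (Cbar K) ((m : ℝ) * n + Cbar 1)) :
    dopt 1 = (m : ℝ) * n ∧ ∀ K : ℕ, 2 ≤ K → dopt K = 2 * ((m : ℝ) * n) := by
  have hc : (0 : ℝ) ≤ m * n := by positivity
  have hC1 := feedbackRecursion_one hc h0 hrec
  refine ⟨by rw [hd, hC1, min_eq_left (by linarith)], fun K hK => ?_⟩
  obtain ⟨j, rfl⟩ := Nat.exists_eq_add_of_le' hK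
  have hsq : 2 * ((m : ℝ) * n) ≤ (1 + m * n) * (m * n) := by
    exact_mod_cast two_mul_le_one_add_mul_self_natCast (m * n)
  rw [hd, hC1, feedbackRecursion_add_two hc h0 hrec, min_eq_right (by linarith), two_mul]

/-- diversity order doubles with a single bit of noisy feedback. -/
theorem stmt8 (m n : ℕ) (hm : 1 ≤ m) (hn : 1 ≤ n)
    (Cbar : ℕ → ℝ) (h0 : Cbar 0 = 0)
    (hrec : ∀ j, Cbar (j + 1) = (1 + min ((m : ℝ) * n) (Cbar j)) * ((m : ℝ) * n))
    (dopt : ℕ → ℝ) (hd : ∀ K, dopt K = min (Cbar K) ((m : ℝ) * n + Cbar 1)) :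
    dopt 1 = (m : ℝ) * n ∧ ∀ K : ℕ, 2 ≤ K → dopt K = 2 * ((m : ℝ) * n) :=
  stmt8_general m n Cbar h0 hrec dopt hd
end

section
/- Under the multiplexing constraint ∑_{i∈S} r_i < min(|S|m,n) for all nonempty S, the function D(r,p) = min_S G_{|S|m,n}(∑_{i∈S} r_i, p) satisfies D(r, 1+mn) ≥ mn + D(r,1). -/
open Finset

lemma Gset_mem_nonneg (m n : ℕ) (r p : ℝ) {s : ℝ}
    (hs : s ∈ { s : ℝ | ∃ α : Fin (min m n) → ℝ,
    (∀ i j : Fin (min m n), i ≤ j → α j ≤ α i) ∧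
    (∀ i, 0 ≤ α i) ∧
    (∑ i, max (p - α i) 0) ≤ r ∧
    s = ∑ i : Fin (min m n), ((2 * (i : ℝ) + 1) + |(m : ℝ) - (n : ℝ)|) * α i }) :
    0 ≤ s := by
  obtain ⟨α, hmono, hpos, hsum, rfl⟩ := hs
  apply Finset.sum_nonneg
  intro i _
  have : (0:ℝ) ≤ (2 * (i : ℝ) + 1) + |(m : ℝ) - (n : ℝ)| := by positivity
  exact mul_nonneg this (hpos i)

lemma Gset_nonempty (m n : ℕ) (r p : ℝ) (hr : 0 ≤ r) (hp : 0 ≤ p) :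
    Set.Nonempty { s : ℝ | ∃ α : Fin (min m n) → ℝ,
    (∀ i j : Fin (min m n), i ≤ j → α j ≤ α i) ∧
    (∀ i, 0 ≤ α i) ∧
    (∑ i, max (p - α i) 0) ≤ r ∧
    s = ∑ i : Fin (min m n), ((2 * (i : ℝ) + 1) + |(m : ℝ) - (n : ℝ)|) * α i } := by
  refine ⟨_, fun _ => p, fun i j _ => le_refl p, fun i => hp, ?_, rfl⟩
  simp [hr]

lemma G_nonneg (m n : ℕ) (r p : ℝ) : 0 ≤ G m n r p :=
  Real.sInf_nonneg (fun _ hs => Gset_mem_nonneg m n r p hs)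

lemma G_step (a n : ℕ) (c t : ℝ) (ha : 1 ≤ a) (hn : 1 ≤ n) (hc : 1 ≤ c)
    (ht0 : 0 ≤ t) (ht : t < min (a:ℝ) n) :
    c + G a n t 1 ≤ G a n t (1 + c) := by
  have hk : 1 ≤ min a n := le_min ha hn
  have hp2 : (0:ℝ) ≤ 1 + c := by linarith
  apply le_csInf (Gset_nonempty a n t (1+c) ht0 hp2)
  rintro s ⟨α, hmono, hpos, hsum, rfl⟩
  -- there is an index with α i ≥ c
  have hcast : ((min a n : ℕ) : ℝ) = min (a:ℝ) (n:ℝ) := by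
    exact Nat.cast_min a n
  have hex : ∃ i : Fin (min a n), c ≤ α i := by
    by_contra h
    push_neg at h
    have hbig : ((min a n : ℕ) : ℝ) ≤ ∑ i : Fin (min a n), max ((1 + c) - α i) 0 := by
      calc ((min a n : ℕ) : ℝ) = ∑ _i : Fin (min a n), (1:ℝ) := by simp
        _ ≤ _ := by
          apply Finset.sum_le_sum
          intro i _
          have := h i
          have h1 : (1:ℝ) ≤ (1 + c) - α i := by linarith
          exact le_max_of_le_left h1
    rw [hcast] at hbig
    linarith [ht, hsum]
  -- zero index
  have hne : (0 : ℕ) < min a n := hk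
  let i0 : Fin (min a n) := ⟨0, hne⟩
  obtain ⟨iw, hiw⟩ := hex
  have hA0 : c ≤ α i0 := le_trans hiw (hmono i0 iw (Fin.mk_le_of_le_val (Nat.zero_le _)))
  -- define β
  set β : Fin (min a n) → ℝ := fun i => max (α i - c) 0 with hβ
  have hβmono : ∀ i j : Fin (min a n), i ≤ j → β j ≤ β i := by
    intro i j hij
    exact max_le_max (by linarith [hmono i j hij]) le_rfl
  have hβpos : ∀ i, 0 ≤ β i := fun i => le_max_right _ _
  have hβsum : (∑ i, max (1 - β i) 0) ≤ t := by
    refine le_trans (Finset.sum_le_sum ?_) hsum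
    intro i _
    rcases le_or_gt c (α i) with h | h
    · have : β i = α i - c := max_eq_left (by linarith)
      rw [this]
      have : (1:ℝ) - (α i - c) = (1 + c) - α i := by ring
      rw [this]
    · have hb : β i = 0 := max_eq_right (by linarith)
      rw [hb]
      have h1 : max (1 - (0:ℝ)) 0 = 1 := by norm_num
      rw [h1]
      have : (1:ℝ) ≤ (1 + c) - α i := by linarith
      exact le_max_of_le_left this
  have hβmem : (∑ i : Fin (min a n), ((2 * (i : ℝ) + 1) + |(a : ℝ) - (n : ℝ)|) * β i) ∈
      { s : ℝ | ∃ α : Fin (min a n) → ℝ,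
        (∀ i j : Fin (min a n), i ≤ j → α j ≤ α i) ∧
        (∀ i, 0 ≤ α i) ∧
        (∑ i, max (1 - α i) 0) ≤ t ∧
        s = ∑ i : Fin (min a n), ((2 * (i : ℝ) + 1) + |(a : ℝ) - (n : ℝ)|) * α i } :=
    ⟨β, hβmono, hβpos, hβsum, rfl⟩
  have hbdd : BddBelow { s : ℝ | ∃ α : Fin (min a n) → ℝ,
        (∀ i j : Fin (min a n), i ≤ j → α j ≤ α i) ∧
        (∀ i, 0 ≤ α i) ∧
        (∑ i, max (1 - α i) 0) ≤ t ∧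
        s = ∑ i : Fin (min a n), ((2 * (i : ℝ) + 1) + |(a : ℝ) - (n : ℝ)|) * α i } :=
    ⟨0, fun s hs => Gset_mem_nonneg a n t 1 hs⟩
  have hG1 : G a n t 1 ≤ ∑ i : Fin (min a n), ((2 * (i : ℝ) + 1) + |(a : ℝ) - (n : ℝ)|) * β i :=
    csInf_le hbdd hβmem
  -- the gap
  have hgap : c + (∑ i : Fin (min a n), ((2 * (i : ℝ) + 1) + |(a : ℝ) - (n : ℝ)|) * β i)
      ≤ ∑ i : Fin (min a n), ((2 * (i : ℝ) + 1) + |(a : ℝ) - (n : ℝ)|) * α i := by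
    have hdiff : ∑ i : Fin (min a n), ((2 * (i : ℝ) + 1) + |(a : ℝ) - (n : ℝ)|) * (α i - β i)
        ≥ ((2 * (i0 : ℝ) + 1) + |(a : ℝ) - (n : ℝ)|) * (α i0 - β i0) := by
      apply Finset.single_le_sum (f := fun i : Fin (min a n) =>
        ((2 * (i : ℝ) + 1) + |(a : ℝ) - (n : ℝ)|) * (α i - β i)) ?_ (Finset.mem_univ i0)
      intro i _
      have hw : (0:ℝ) ≤ (2 * (i : ℝ) + 1) + |(a : ℝ) - (n : ℝ)| := by positivity
      have : 0 ≤ α i - β i := by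
        rcases le_or_gt c (α i) with h | h
        · have : β i = α i - c := max_eq_left (by linarith)
          rw [this]; linarith
        · have : β i = 0 := max_eq_right (by linarith)
          rw [this]; linarith [hpos i]
      exact mul_nonneg hw this
    have hβ0 : β i0 = α i0 - c := max_eq_left (by linarith)
    have hterm : c ≤ ((2 * (i0 : ℝ) + 1) + |(a : ℝ) - (n : ℝ)|) * (α i0 - β i0) := by
      rw [hβ0]
      have hw1 : (1:ℝ) ≤ (2 * (i0 : ℝ) + 1) + |(a : ℝ) - (n : ℝ)| := by
        have : (0:ℝ) ≤ (i0 : ℝ) := by positivity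
        have := abs_nonneg ((a:ℝ) - n)
        linarith
      have : α i0 - (α i0 - c) = c := by ring
      rw [this]
      nlinarith
    have hsplit : ∑ i : Fin (min a n), ((2 * (i : ℝ) + 1) + |(a : ℝ) - (n : ℝ)|) * α i
        = (∑ i : Fin (min a n), ((2 * (i : ℝ) + 1) + |(a : ℝ) - (n : ℝ)|) * β i)
          + ∑ i : Fin (min a n), ((2 * (i : ℝ) + 1) + |(a : ℝ) - (n : ℝ)|) * (α i - β i) := by
      rw [← Finset.sum_add_distrib]
      apply Finset.sum_congr rfl
      intro i _
      ring
    linarith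
  linarith


/-- D(r,1+mn) ≥ mn + D(r,1). -/
theorem stmt10 (L m n : ℕ) (hL : 1 ≤ L) (hm : 1 ≤ m) (hn : 1 ≤ n)
    (r : Fin L → ℝ) (hr0 : ∀ i, 0 ≤ r i)
    (hr : ∀ S : Finset (Fin L), S.Nonempty → ∑ i ∈ S, r i < ((min (S.card * m) n : ℕ) : ℝ)) :
    D L m n r (1 + (m : ℝ) * n) ≥ (m : ℝ) * n + D L m n r 1 := by
  have hc : (1:ℝ) ≤ (m:ℝ) * n := by
    have : (1:ℝ) ≤ (m:ℝ) := by exact_mod_cast hm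
    have : (1:ℝ) ≤ (n:ℝ) := by exact_mod_cast hn
    nlinarith [show (1:ℝ) ≤ (m:ℝ) from by exact_mod_cast hm]
  have hDbdd : BddBelow { d : ℝ | ∃ S : Finset (Fin L), S.Nonempty ∧
      d = G (S.card * m) n (∑ i ∈ S, r i) 1 } := by
    refine ⟨0, fun d hd => ?_⟩
    obtain ⟨S, hS, rfl⟩ := hd
    exact G_nonneg _ _ _ _
  have hi0 : (0:ℕ) < L := hL
  have hDne2 : Set.Nonempty { d : ℝ | ∃ S : Finset (Fin L), S.Nonempty ∧
      d = G (S.card * m) n (∑ i ∈ S, r i) (1 + (m:ℝ)*n) } :=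
    ⟨_, {⟨0, hi0⟩}, Finset.singleton_nonempty _, rfl⟩
  rw [ge_iff_le, D, D]
  apply le_csInf hDne2
  rintro d ⟨S, hS, rfl⟩
  have ht0 : 0 ≤ ∑ i ∈ S, r i := Finset.sum_nonneg (fun i _ => hr0 i)
  have ha : 1 ≤ S.card * m := Nat.one_le_iff_ne_zero.mpr (by
    have := Finset.card_pos.mpr hS
    positivity)
  have htlt : ∑ i ∈ S, r i < min ((S.card * m : ℕ):ℝ) (n:ℝ) := by
    have := hr S hS
    rwa [Nat.cast_min] at this
  have hstep := G_step (S.card * m) n ((m:ℝ)*n) (∑ i ∈ S, r i) ha hn hc ht0 htlt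
  have hmem : G (S.card * m) n (∑ i ∈ S, r i) 1 ∈ { d : ℝ | ∃ S' : Finset (Fin L), S'.Nonempty ∧
      d = G (S'.card * m) n (∑ i ∈ S', r i) 1 } := ⟨S, hS, rfl⟩
  have := csInf_le hDbdd hmem
  linarith
end

section
/- For the single-user case (L=1) with integer multiplexing gain r, 0 ≤ r < min(m,n), the saturated noisy-feedback diversity equals mn + (m-r)(n-r). -/
open Finset

private lemma sum_odd (d : ℝ) (t : ℕ) :
    ∑ i ∈ Finset.range t, ((2 * (i : ℝ) + 1) + d) = (t : ℝ) ^ 2 + t * d := by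
  induction t with
  | zero => simp
  | succ s ih => rw [Finset.sum_range_succ, ih]; push_cast; ring

/-- single-user saturated noisy-feedback diversity at integer multiplexing r. -/
theorem stmt16 (m n r : ℕ) (hm : 1 ≤ m) (hn : 1 ≤ n) (hr : r < min m n) :
    (m : ℝ) * n + G m n (r : ℝ) 1 = (m : ℝ) * n + ((m : ℝ) - r) * ((n : ℝ) - r) := by
  have hrk : r ≤ min m n := hr.le
  set k := min m n with hk
  set t := k - r with htdef
  have htk : t ≤ k := Nat.sub_le _ _
  have hktr : k - t = r := by omega
  have hd0 : (0 : ℝ) ≤ |(m : ℝ) - n| := abs_nonneg _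
  have htR : (t : ℝ) = (k : ℝ) - r := by
    rw [htdef, Nat.cast_sub hrk]
  have hV : (t : ℝ) ^ 2 + t * |(m : ℝ) - n| = ((m : ℝ) - r) * ((n : ℝ) - r) := by
    rcases le_total m n with h | h
    · have hk' : (k : ℝ) = m := by rw [hk, min_eq_left h]
      have hd' : |(m : ℝ) - n| = (n : ℝ) - m := by
        rw [abs_of_nonpos (by exact sub_nonpos.2 (by exact_mod_cast h))]; ring
      rw [htR, hk', hd']; ring
    · have hk' : (k : ℝ) = n := by rw [hk, min_eq_right h]
      have hd' : |(m : ℝ) - n| = (m : ℝ) - n := by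
        rw [abs_of_nonneg (by exact sub_nonneg.2 (by exact_mod_cast h))]
      rw [htR, hk', hd']; ring
  -- threshold coefficient
  set C : ℝ := 2 * (t : ℝ) + 1 + |(m : ℝ) - n| with hCdef
  have hC0 : (0 : ℝ) ≤ C := by rw [hCdef]; positivity
  have hfilt1 : (Finset.range k).filter (fun i => i < t) = Finset.range t := by
    ext i; simp only [Finset.mem_filter, Finset.mem_range]; omega
  have hfilt2 : (Finset.range k).filter (fun i => ¬ i < t) = Finset.Ico t k := by
    ext i; simp only [Finset.mem_filter, Finset.mem_range, Finset.mem_Ico]; omega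
  -- the key identity for the lower bound
  have hW : ∑ i : Fin k, (if (i : ℕ) < t then (2 * (i : ℝ) + 1) + |(m : ℝ) - n| else C)
      = ((m : ℝ) - r) * ((n : ℝ) - r) + r * C := by
    rw [Fin.sum_univ_eq_sum_range
      (fun i => if i < t then (2 * (i : ℝ) + 1) + |(m : ℝ) - n| else C) k]
    rw [Finset.sum_ite, hfilt1, hfilt2, sum_odd, Finset.sum_const, Nat.card_Ico, hktr,
      nsmul_eq_mul, hV]
  -- membership: the optimal point
  have hmem : ∃ α : Fin k → ℝ,
      (∀ i j : Fin k, i ≤ j → α j ≤ α i) ∧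
      (∀ i, 0 ≤ α i) ∧
      (∑ i, max ((1 : ℝ) - α i) 0) ≤ (r : ℝ) ∧
      ((m : ℝ) - r) * ((n : ℝ) - r)
        = ∑ i : Fin k, ((2 * (i : ℝ) + 1) + |(m : ℝ) - (n : ℝ)|) * α i := by
    refine ⟨fun i => if (i : ℕ) < t then 1 else 0, ?_, ?_, ?_, ?_⟩
    · intro i j hij
      have : (i : ℕ) ≤ j := hij
      by_cases hj : (j : ℕ) < t
      · have hi : (i : ℕ) < t := lt_of_le_of_lt this hj
        simp [hi, hj]
      · simp only [hj, if_false]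
        split_ifs <;> norm_num
    · intro i; dsimp only; split_ifs <;> norm_num
    · have heq : ∀ i : Fin k, max ((1 : ℝ) - (if (i : ℕ) < t then (1 : ℝ) else 0)) 0
          = if (i : ℕ) < t then (0 : ℝ) else 1 := by
        intro i; split_ifs <;> norm_num
      rw [Finset.sum_congr rfl (fun i _ => heq i)]
      rw [Fin.sum_univ_eq_sum_range (fun i => if i < t then (0 : ℝ) else 1) k]
      rw [Finset.sum_ite, hfilt1, hfilt2, Finset.sum_const, Finset.sum_const, Nat.card_Ico,
        hktr, nsmul_eq_mul, nsmul_eq_mul]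
      simp
    · have heq : ∀ i : Fin k,
          ((2 * (i : ℝ) + 1) + |(m : ℝ) - n|) * (if (i : ℕ) < t then (1 : ℝ) else 0)
          = if (i : ℕ) < t then (2 * (i : ℝ) + 1) + |(m : ℝ) - n| else 0 := by
        intro i; split_ifs <;> ring
      rw [Finset.sum_congr rfl (fun i _ => heq i)]
      rw [Fin.sum_univ_eq_sum_range
        (fun i => if i < t then (2 * (i : ℝ) + 1) + |(m : ℝ) - n| else (0 : ℝ)) k]
      rw [Finset.sum_ite, hfilt1, hfilt2, sum_odd, Finset.sum_const, smul_zero, add_zero, hV]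
  -- lower bound
  have hlb : ∀ s : ℝ, (∃ α : Fin k → ℝ,
      (∀ i j : Fin k, i ≤ j → α j ≤ α i) ∧
      (∀ i, 0 ≤ α i) ∧
      (∑ i, max ((1 : ℝ) - α i) 0) ≤ (r : ℝ) ∧
      s = ∑ i : Fin k, ((2 * (i : ℝ) + 1) + |(m : ℝ) - (n : ℝ)|) * α i) →
      ((m : ℝ) - r) * ((n : ℝ) - r) ≤ s := by
    rintro s ⟨α, hmono, hpos, hcon, rfl⟩
    have hpt : ∀ i : Fin k,
        (if (i : ℕ) < t then (2 * (i : ℝ) + 1) + |(m : ℝ) - n| else C)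
        ≤ ((2 * (i : ℝ) + 1) + |(m : ℝ) - n|) * α i + C * max ((1 : ℝ) - α i) 0 := by
      intro i
      have hb0 : (0 : ℝ) ≤ max ((1 : ℝ) - α i) 0 := le_max_right _ _
      have hb1 : (1 : ℝ) - α i ≤ max ((1 : ℝ) - α i) 0 := le_max_left _ _
      have hc0 : (0 : ℝ) ≤ (2 * (i : ℝ) + 1) + |(m : ℝ) - n| := by positivity
      have hαi := hpos i
      by_cases hi : (i : ℕ) < t
      · have hcC : (2 * (i : ℝ) + 1) + |(m : ℝ) - n| ≤ C := by
          rw [hCdef]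
          have : (i : ℝ) ≤ t := by exact_mod_cast hi.le
          linarith
        rw [if_pos hi]
        nlinarith
      · have hcC : C ≤ (2 * (i : ℝ) + 1) + |(m : ℝ) - n| := by
          rw [hCdef]
          have : (t : ℝ) ≤ i := by exact_mod_cast Nat.le_of_not_lt hi
          linarith
        rw [if_neg hi]
        nlinarith
    have hsum := Finset.sum_le_sum (s := (Finset.univ : Finset (Fin k))) (fun i _ => hpt i)
    rw [hW, Finset.sum_add_distrib, ← Finset.mul_sum] at hsum
    nlinarith [hcon]
  congr 1
  show sInf _ = _
  refine le_antisymm (csInf_le ⟨_, fun s hs => hlb s hs⟩ hmem) (le_csInf ⟨_, hmem⟩ (fun s hs => hlb s hs))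
end
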